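/- arXiv:1805.03826 — 2 statements merged into one kernel-verified Lean document; each statement's English description precedes it below -/
import Mathlib

section
/- Burchnall–Chaundy expansion: for x, y in a suitable neighborhood of 0, the Appell function satisfies F_2(a; b_1, b_2; c_1, c_2; x, y) = ∑_{k=0}^∞ (a)_k (b_1)_k (b_2)_k / (k! (c_1)_k (c_2)_k) x^k y^k F(a+k, b_1+k; c_1+k; x) F(a+k, b_2+k; c_2+k; y), where both sides converge absolutely. -/
open Complex

/-- The Gauss hypergeometric series. -/
noncomputable def gaussF (a b c x : ℂ) : ℂ :=
  ∑' k : ℕ,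
    (ascPochhammer ℂ k).eval a * (ascPochhammer ℂ k).eval b * x ^ k /
      ((Nat.factorial k : ℂ) * (ascPochhammer ℂ k).eval c)

/-- The Appell hypergeometric series F₂. -/
noncomputable def appellF2 (a b1 b2 c1 c2 x y : ℂ) : ℂ :=
  ∑' p : ℕ × ℕ,
    (ascPochhammer ℂ (p.1 + p.2)).eval a *
      (ascPochhammer ℂ p.1).eval b1 * (ascPochhammer ℂ p.2).eval b2 * x ^ p.1 * y ^ p.2 /
      ((Nat.factorial p.1 : ℂ) * (Nat.factorial p.2 : ℂ) *
        (ascPochhammer ℂ p.1).eval c1 * (ascPochhammer ℂ p.2).eval c2)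

/-- The k-th term of the Burchnall–Chaundy expansion of F₂. -/
noncomputable def bcTerm (a b1 b2 c1 c2 x y : ℂ) (k : ℕ) : ℂ :=
  (ascPochhammer ℂ k).eval a * (ascPochhammer ℂ k).eval b1 * (ascPochhammer ℂ k).eval b2 /
      ((Nat.factorial k : ℂ) * (ascPochhammer ℂ k).eval c1 * (ascPochhammer ℂ k).eval c2) *
    x ^ k * y ^ k *
    gaussF (a + k) (b1 + k) (c1 + k) x * gaussF (a + k) (b2 + k) (c2 + k) y

/-!
Since `(a)_{m+n} = (a)_m (a+m)_n` and
`(a+m)_n / (m! n!) = ∑_{k ≤ min m n} (a+k)_{n-k} / (k! (m-k)! (n-k)!)`,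
the `(m, n)` term of `F₂` is a finite sum of the terms `(k, m-k, n-k)` of a triple family whose
`(k, i, j)` term is the `k`-th Burchnall–Chaundy coefficient times the `i`-th term of
`F(a+k, b₁+k; c₁+k; x)` times the `j`-th term of `F(a+k, b₂+k; c₂+k; y)`.
Summing the triple family over `(i, j)` first gives the Burchnall–Chaundy series, summing it over
the fibres of `(k, i, j) ↦ (k+i, k+j)` first gives `F₂`. Both rearrangements are legitimate once the
triple family is absolutely summable: as `c ∉ -ℕ`, `|c + l| ≥ δ (l + 1)` for some `δ > 0`, and
together with `|(z+k)_i| ≤ 2^k (2(|z|+1))^i i!` this gives a geometric majorant for small `x, y`.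
-/

open Finset Nat

theorem ascPochhammer_add_eval {R : Type*} [CommSemiring R] (m n : ℕ) (a : R) :
    (ascPochhammer R (m + n)).eval a =
      (ascPochhammer R m).eval a * (ascPochhammer R n).eval (a + m) := by
  simp [← ascPochhammer_mul, Polynomial.eval_comp]

theorem ascPochhammer_succ_eval_left {R : Type*} [CommSemiring R] (n : ℕ) (a : R) :
    (ascPochhammer R (n + 1)).eval a = a * (ascPochhammer R n).eval (a + 1) := by
  simp [ascPochhammer_succ_left, Polynomial.eval_comp]

theorem ascPochhammer_eval_add_natCast {R : Type*} [CommSemiring R] (m n : ℕ) (a : R) :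
    (ascPochhammer R n).eval (a + m) =
      ∑ k ∈ range (n + 1),
        (m.choose k * n.choose k * k ! : ℕ) * (ascPochhammer R (n - k)).eval (a + k) := by
  induction m generalizing n a with
  | zero =>
    rw [sum_eq_single 0 (fun k _ hk => by simp [Nat.choose_eq_zero_of_lt (Nat.pos_of_ne_zero hk)])
      (by simp)]
    simp
  | succ m ih =>
    -- Pascal's rule in `m` splits off `n + 1` times the identity for `(n, a + 1)`, and
    -- `(a+m) (a+m+1)_n + (n+1) (a+m+1)_n = (a+m+1)_{n+1}`.
    cases n with
    | zero => simp
    | succ n =>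
      have hcoeff : ∀ k, (m + 1).choose (k + 1) * (n + 1).choose (k + 1) * (k + 1)! =
          m.choose (k + 1) * (n + 1).choose (k + 1) * (k + 1)! +
            (n + 1) * (m.choose k * n.choose k * k !) := by
        intro k
        rw [Nat.choose_succ_succ', Nat.factorial_succ,
          show (n + 1) * (m.choose k * n.choose k * k !) =
            m.choose k * ((n + 1) * n.choose k) * (k !) by ring,
          Nat.add_one_mul_choose_eq]
        ring
      have hsplit : ∑ k ∈ range (n + 1 + 1), ((m + 1).choose k * (n + 1).choose k * k ! : ℕ) *
            (ascPochhammer R (n + 1 - k)).eval (a + k)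
          = ∑ k ∈ range (n + 1 + 1), (m.choose k * (n + 1).choose k * k ! : ℕ) *
              (ascPochhammer R (n + 1 - k)).eval (a + k) +
            (n + 1) * ∑ k ∈ range (n + 1), (m.choose k * n.choose k * k ! : ℕ) *
              (ascPochhammer R (n - k)).eval (a + 1 + k) := by
        rw [sum_range_succ', sum_range_succ' _ (n + 1), mul_sum]
        simp only [hcoeff, Nat.cast_add, Nat.cast_mul, add_mul, sum_add_distrib,
          Nat.choose_zero_right]
        push_cast
        simp only [add_assoc, add_comm (1 : R)]
        ring_nf
      rw [← ih, ← ih, ascPochhammer_succ_eval_left] at hsplit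
      rw [hsplit, ascPochhammer_succ_eval]
      push_cast
      rw [add_right_comm a 1, ← add_assoc]
      ring

theorem ascPochhammer_eval_add_natCast_div {K : Type*} [Field K] [CharZero K] (m n : ℕ) (a : K) :
    (ascPochhammer K n).eval (a + m) / (m ! * n !) =
      ∑ k ∈ range (min m n + 1),
        (ascPochhammer K (n - k)).eval (a + k) / (k ! * (m - k)! * (n - k)!) := by
  rw [ascPochhammer_eval_add_natCast, sum_div]
  refine (sum_subset (range_subset_range.2 (by omega)) fun k hk hkmin => ?_).symm.trans
    (sum_congr rfl fun k hk => ?_)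
  · simp only [mem_range] at hk hkmin
    rw [Nat.choose_eq_zero_of_lt (by omega)]
    simp
  · simp only [mem_range, Nat.lt_succ_iff, le_min_iff] at hk
    push_cast
    rw [Nat.cast_choose K hk.1, Nat.cast_choose K hk.2]
    field_simp [Nat.factorial_ne_zero]

noncomputable def gaussTerm (a b c x : ℂ) (i : ℕ) : ℂ :=
  (ascPochhammer ℂ i).eval a * (ascPochhammer ℂ i).eval b * x ^ i /
    ((i ! : ℂ) * (ascPochhammer ℂ i).eval c)

theorem gaussF_eq_tsum_gaussTerm (a b c x : ℂ) : gaussF a b c x = ∑' i, gaussTerm a b c x i := rfl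

noncomputable def appellTerm (a b1 b2 c1 c2 x y : ℂ) (p : ℕ × ℕ) : ℂ :=
  (ascPochhammer ℂ (p.1 + p.2)).eval a *
      (ascPochhammer ℂ p.1).eval b1 * (ascPochhammer ℂ p.2).eval b2 * x ^ p.1 * y ^ p.2 /
    ((p.1 ! : ℂ) * (p.2 ! : ℂ) * (ascPochhammer ℂ p.1).eval c1 * (ascPochhammer ℂ p.2).eval c2)

noncomputable def bcCoeff (a b1 b2 c1 c2 : ℂ) (k : ℕ) : ℂ :=
  (ascPochhammer ℂ k).eval a * (ascPochhammer ℂ k).eval b1 * (ascPochhammer ℂ k).eval b2 /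
    ((k ! : ℂ) * (ascPochhammer ℂ k).eval c1 * (ascPochhammer ℂ k).eval c2)

noncomputable def bcTripleTerm (a b1 b2 c1 c2 x y : ℂ) (t : ℕ × ℕ × ℕ) : ℂ :=
  bcCoeff a b1 b2 c1 c2 t.1 * x ^ t.1 * y ^ t.1 *
    (gaussTerm (a + t.1) (b1 + t.1) (c1 + t.1) x t.2.1 *
      gaussTerm (a + t.1) (b2 + t.1) (c2 + t.1) y t.2.2)

theorem appellTerm_eq_sum_bcTripleTerm (a b1 b2 c1 c2 x y : ℂ) (p : ℕ × ℕ) :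
    appellTerm a b1 b2 c1 c2 x y p =
      ∑ k ∈ range (min p.1 p.2 + 1), bcTripleTerm a b1 b2 c1 c2 x y (k, p.1 - k, p.2 - k) := by
  obtain ⟨m, n⟩ := p
  set w : ℂ := (ascPochhammer ℂ m).eval a * (ascPochhammer ℂ m).eval b1 *
    (ascPochhammer ℂ n).eval b2 * x ^ m * y ^ n /
      ((ascPochhammer ℂ m).eval c1 * (ascPochhammer ℂ n).eval c2)
  have hterm : ∀ k ∈ range (min m n + 1), bcTripleTerm a b1 b2 c1 c2 x y (k, m - k, n - k) =
      w * ((ascPochhammer ℂ (n - k)).eval (a + k) / (k ! * (m - k)! * (n - k)!)) := by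
    intro k hk
    obtain ⟨i, rfl⟩ : ∃ i, m = k + i := ⟨m - k, by grind⟩
    obtain ⟨j, rfl⟩ : ∃ j, n = k + j := ⟨n - k, by grind⟩
    simp only [w, bcTripleTerm, bcCoeff, gaussTerm, ascPochhammer_add_eval, pow_add,
      Nat.add_sub_cancel_left]
    ring
  calc appellTerm a b1 b2 c1 c2 x y (m, n)
        = w * ((ascPochhammer ℂ n).eval (a + m) / (m ! * n !)) := by
        simp only [w, appellTerm, ascPochhammer_add_eval]
        ring
    _ = _ := by
      rw [ascPochhammer_eval_add_natCast_div, mul_sum]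
      exact sum_congr rfl fun k hk => (hterm k hk).symm

theorem HasSum.sum_range_min {E : Type*} [AddCommMonoid E] [TopologicalSpace E] [ContinuousAdd E]
    [RegularSpace E] {f : ℕ × ℕ × ℕ → E} {s : E} (hf : HasSum f s) :
    HasSum (fun p : ℕ × ℕ => ∑ k ∈ range (min p.1 p.2 + 1), f (k, p.1 - k, p.2 - k)) s := by
  let e : ℕ × ℕ × ℕ → (ℕ × ℕ) × ℕ := fun t => ((t.1 + t.2.1, t.1 + t.2.2), t.1)
  have he : Function.Injective e := by
    rintro ⟨k, i, j⟩ ⟨k', i', j'⟩ h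
    simp only [e, Prod.mk.injEq] at h ⊢
    omega
  refine ((hasSum_extend_zero he).2 hf).prod_fiberwise fun ⟨m, n⟩ => ?_
  have hfiber : ∀ k < min m n + 1, e (k, m - k, n - k) = ((m, n), k) := fun k hk => by
    simp only [e, Prod.mk.injEq, and_true]
    omega
  have hzero : ∀ k ∉ range (min m n + 1), Function.extend e f 0 ((m, n), k) = 0 := by
    intro k hk
    refine Function.extend_apply' _ _ _ ?_
    rintro ⟨⟨k', i, j⟩, h⟩
    simp only [e, Prod.mk.injEq] at h
    simp only [mem_range, Nat.lt_succ_iff, le_min_iff] at hk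
    omega
  show HasSum _ (∑ k ∈ range (min m n + 1), f (k, m - k, n - k))
  have hsum : HasSum _ _ := hasSum_sum_of_ne_finset_zero hzero
  rwa [sum_congr rfl fun k hk => by rw [← hfiber k (mem_range.1 hk), he.extend_apply]] at hsum

section Rearrangement

variable {a b1 b2 c1 c2 x y : ℂ}

theorem summable_norm_appellTerm (hG : Summable fun t => ‖bcTripleTerm a b1 b2 c1 c2 x y t‖) :
    Summable fun p => ‖appellTerm a b1 b2 c1 c2 x y p‖ :=
  hG.hasSum.sum_range_min.summable.of_nonneg_of_le (fun _ => norm_nonneg _) fun p => by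
    rw [appellTerm_eq_sum_bcTripleTerm]
    exact norm_sum_le _ _

theorem hasSum_appellTerm (hG : Summable fun t => ‖bcTripleTerm a b1 b2 c1 c2 x y t‖) :
    HasSum (appellTerm a b1 b2 c1 c2 x y) (∑' t, bcTripleTerm a b1 b2 c1 c2 x y t) := by
  simpa only [← appellTerm_eq_sum_bcTripleTerm] using hG.of_norm.hasSum.sum_range_min

theorem bcTerm_eq_tsum_bcTripleTerm {k : ℕ}
    (hu : Summable fun i => ‖gaussTerm (a + k) (b1 + k) (c1 + k) x i‖)
    (hv : Summable fun j => ‖gaussTerm (a + k) (b2 + k) (c2 + k) y j‖) :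
    bcTerm a b1 b2 c1 c2 x y k = ∑' p : ℕ × ℕ, bcTripleTerm a b1 b2 c1 c2 x y (k, p) := by
  rw [bcTerm, mul_assoc, gaussF_eq_tsum_gaussTerm, gaussF_eq_tsum_gaussTerm,
    tsum_mul_tsum_of_summable_norm hu hv, ← tsum_mul_left]
  rfl

theorem summable_norm_bcTerm
    (hu : ∀ k : ℕ, Summable fun i => ‖gaussTerm (a + k) (b1 + k) (c1 + k) x i‖)
    (hv : ∀ k : ℕ, Summable fun j => ‖gaussTerm (a + k) (b2 + k) (c2 + k) y j‖)
    (hG : Summable fun t => ‖bcTripleTerm a b1 b2 c1 c2 x y t‖) :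
    Summable fun k => ‖bcTerm a b1 b2 c1 c2 x y k‖ :=
  hG.prod.of_nonneg_of_le (fun _ => norm_nonneg _) fun k => by
    rw [bcTerm_eq_tsum_bcTripleTerm (hu k) (hv k)]
    exact norm_tsum_le_tsum_norm (hG.prod_factor k)

theorem tsum_bcTerm
    (hu : ∀ k : ℕ, Summable fun i => ‖gaussTerm (a + k) (b1 + k) (c1 + k) x i‖)
    (hv : ∀ k : ℕ, Summable fun j => ‖gaussTerm (a + k) (b2 + k) (c2 + k) y j‖)
    (hG : Summable fun t => ‖bcTripleTerm a b1 b2 c1 c2 x y t‖) :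
    ∑' k, bcTerm a b1 b2 c1 c2 x y k = ∑' t, bcTripleTerm a b1 b2 c1 c2 x y t := by
  rw [hG.of_norm.tsum_prod]
  exact tsum_congr fun k => bcTerm_eq_tsum_bcTripleTerm (hu k) (hv k)

end Rearrangement

theorem exists_pos_mul_le_norm_add_natCast {c : ℂ} (hc : ∀ l : ℕ, c ≠ -l) :
    ∃ δ > 0, ∀ l : ℕ, δ * (l + 1) ≤ ‖c + l‖ := by
  have hpos : ∀ l : ℕ, 0 < ‖c + l‖ / (l + 1) := fun l =>
    div_pos (norm_pos_iff.2 fun h => hc l (eq_neg_of_add_eq_zero_left h)) (by positivity)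
  set N := ⌈2 * ‖c‖⌉₊ + 1
  obtain ⟨l₀, -, hl₀⟩ :=
    (range N).exists_min_image (fun l : ℕ => ‖c + l‖ / (l + 1)) ⟨0, by simp [N]⟩
  refine ⟨min (‖c + l₀‖ / (l₀ + 1)) (1 / 2), lt_min (hpos l₀) (by norm_num), fun l => ?_⟩
  rcases lt_or_ge l N with hl | hl
  · rw [← le_div_iff₀ (by positivity)]
    exact (min_le_left _ _).trans (hl₀ l (mem_range.2 hl))
  · have hlc : 2 * ‖c‖ + 1 ≤ l := by
      have := Nat.le_ceil (2 * ‖c‖)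
      have : (N : ℝ) ≤ l := Nat.cast_le.2 hl
      push_cast [N] at this
      linarith
    have hrev : (l : ℝ) - ‖c‖ ≤ ‖c + l‖ := by
      simpa [sub_neg_eq_add, add_comm] using norm_sub_norm_le (l : ℂ) (-c)
    nlinarith [min_le_right (‖c + l₀‖ / (l₀ + 1)) (1 / 2)]

theorem norm_add_natCast_le (z : ℂ) (l : ℕ) : ‖z + l‖ ≤ (‖z‖ + 1) * (l + 1) := by
  have := norm_add_le z l
  rw [Complex.norm_natCast] at this
  nlinarith [norm_nonneg z, (Nat.cast_nonneg l : (0 : ℝ) ≤ l)]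

theorem norm_ascPochhammer_eval_le_pow_mul {𝕜 : Type*} [NormedDivisionRing 𝕜] {z c : 𝕜} {r : ℝ}
    (h : ∀ l : ℕ, ‖z + l‖ ≤ r * ‖c + l‖) (i : ℕ) :
    ‖(ascPochhammer 𝕜 i).eval z‖ ≤ r ^ i * ‖(ascPochhammer 𝕜 i).eval c‖ := by
  induction i with
  | zero => simp
  | succ i ih =>
    rw [ascPochhammer_succ_eval, ascPochhammer_succ_eval, norm_mul, norm_mul, pow_succ]
    calc ‖(ascPochhammer 𝕜 i).eval z‖ * ‖z + i‖
        ≤ (r ^ i * ‖(ascPochhammer 𝕜 i).eval c‖) * (r * ‖c + i‖) :=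
          mul_le_mul ih (h i) (norm_nonneg _) ((norm_nonneg _).trans ih)
      _ = _ := by ring

theorem norm_ascPochhammer_eval_add_natCast_le (z : ℂ) (k i : ℕ) :
    ‖(ascPochhammer ℂ i).eval (z + k)‖ ≤ 2 ^ k * (2 * (‖z‖ + 1)) ^ i * i ! := by
  have hratio : ∀ l : ℕ, ‖z + k + l‖ ≤ (‖z‖ + 1) * ‖((k + 1 : ℕ) : ℂ) + l‖ := fun l => by
    rw [add_assoc, ← Nat.cast_add, ← Nat.cast_add, Complex.norm_natCast]
    refine (norm_add_natCast_le z (k + l)).trans_eq ?_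
    push_cast
    ring
  have hasc : (((k + 1).ascFactorial i : ℕ) : ℝ) ≤ 2 ^ (k + i) * i ! := by
    rw [Nat.ascFactorial_eq_factorial_mul_choose, mul_comm]
    exact_mod_cast Nat.mul_le_mul_right _ (Nat.choose_le_two_pow _ _)
  calc ‖(ascPochhammer ℂ i).eval (z + k)‖
      ≤ (‖z‖ + 1) ^ i * (((k + 1).ascFactorial i : ℕ) : ℝ) := by
        have := norm_ascPochhammer_eval_le_pow_mul hratio i
        rwa [ascPochhammer_nat_eq_natCast_ascFactorial, Complex.norm_natCast] at this
    _ ≤ (‖z‖ + 1) ^ i * (2 ^ (k + i) * i !) := by gcongr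
    _ = _ := by rw [mul_pow, pow_add]; ring

theorem norm_ascPochhammer_eval_add_natCast_div_le {c : ℂ} {δ : ℝ} (hδ : 0 < δ)
    (hc : ∀ l : ℕ, δ * (l + 1) ≤ ‖c + l‖) (b : ℂ) (k i : ℕ) :
    ‖(ascPochhammer ℂ i).eval (b + k) / (ascPochhammer ℂ i).eval (c + k)‖ ≤
      ((‖b‖ + 1) / δ) ^ i := by
  have hratio : ∀ l : ℕ, ‖b + k + l‖ ≤ (‖b‖ + 1) / δ * ‖c + k + l‖ := fun l => by
    rw [add_assoc, add_assoc, ← Nat.cast_add, div_mul_eq_mul_div,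
      le_div_iff₀ hδ]
    calc ‖b + (k + l : ℕ)‖ * δ ≤ (‖b‖ + 1) * ((k + l : ℕ) + 1) * δ := by
          gcongr
          exact norm_add_natCast_le b _
      _ = (‖b‖ + 1) * (δ * ((k + l : ℕ) + 1)) := by ring
      _ ≤ (‖b‖ + 1) * ‖c + (k + l : ℕ)‖ := by gcongr; exact hc _
  rw [norm_div]
  exact div_le_of_le_mul₀ (norm_nonneg _) (by positivity)
    (norm_ascPochhammer_eval_le_pow_mul hratio i)

theorem norm_gaussTerm_add_natCast_le {c : ℂ} {δ : ℝ} (hδ : 0 < δ)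
    (hc : ∀ l : ℕ, δ * (l + 1) ≤ ‖c + l‖) (a b x : ℂ) (k i : ℕ) :
    ‖gaussTerm (a + k) (b + k) (c + k) x i‖ ≤
      2 ^ k * (2 * (‖a‖ + 1) * (‖b‖ + 1) * ‖x‖ / δ) ^ i := by
  have h : gaussTerm (a + k) (b + k) (c + k) x i = (ascPochhammer ℂ i).eval (a + k) / i ! *
      ((ascPochhammer ℂ i).eval (b + k) / (ascPochhammer ℂ i).eval (c + k)) * x ^ i := by
    rw [gaussTerm]
    ring
  rw [h, norm_mul, norm_mul, norm_div, norm_pow, Complex.norm_natCast]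
  calc _ ≤ 2 ^ k * (2 * (‖a‖ + 1)) ^ i * ((‖b‖ + 1) / δ) ^ i * ‖x‖ ^ i := by
        gcongr
        · rw [div_le_iff₀ (by positivity)]
          exact norm_ascPochhammer_eval_add_natCast_le a k i
        · exact norm_ascPochhammer_eval_add_natCast_div_le hδ hc b k i
    _ = _ := by simp only [div_pow, mul_pow]; ring

theorem summable_norm_gaussTerm_add_natCast {c : ℂ} {δ : ℝ} (hδ : 0 < δ)
    (hc : ∀ l : ℕ, δ * (l + 1) ≤ ‖c + l‖) {a b x : ℂ}
    (hx : 2 * (‖a‖ + 1) * (‖b‖ + 1) * ‖x‖ / δ < 1) (k : ℕ) :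
    Summable fun i => ‖gaussTerm (a + k) (b + k) (c + k) x i‖ :=
  ((summable_geometric_of_lt_one (by positivity) hx).mul_left _).of_nonneg_of_le
    (fun _ => norm_nonneg _) (norm_gaussTerm_add_natCast_le hδ hc a b x k)

section Estimates

variable {c1 c2 : ℂ} {δ1 δ2 : ℝ}

theorem norm_bcCoeff_mul_le (hδ1 : 0 < δ1) (hδ2 : 0 < δ2)
    (hc1 : ∀ l : ℕ, δ1 * (l + 1) ≤ ‖c1 + l‖) (hc2 : ∀ l : ℕ, δ2 * (l + 1) ≤ ‖c2 + l‖)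
    (a b1 b2 x y : ℂ) (k : ℕ) :
    ‖bcCoeff a b1 b2 c1 c2 k * x ^ k * y ^ k‖ ≤
      (2 * (‖a‖ + 1) * (‖b1‖ + 1) * ‖x‖ / δ1) ^ k *
        (2 * (‖a‖ + 1) * (‖b2‖ + 1) * ‖y‖ / δ2) ^ k := by
  have h : bcCoeff a b1 b2 c1 c2 k * x ^ k * y ^ k = gaussTerm a b1 c1 x k *
      ((ascPochhammer ℂ k).eval b2 / (ascPochhammer ℂ k).eval c2 * y ^ k) := by
    rw [bcCoeff, gaussTerm]
    ring
  have hgauss := norm_gaussTerm_add_natCast_le hδ1 hc1 a b1 x 0 k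
  have hratio := norm_ascPochhammer_eval_add_natCast_div_le hδ2 hc2 b2 0 k
  simp only [Nat.cast_zero, add_zero, pow_zero, one_mul] at hgauss hratio
  rw [h, norm_mul, norm_mul, norm_pow]
  gcongr
  calc _ ≤ ((‖b2‖ + 1) / δ2) ^ k * ‖y‖ ^ k := by gcongr
    _ ≤ _ := by
      rw [← mul_pow]
      gcongr
      have : 1 ≤ 2 * (‖a‖ + 1) := by linarith [norm_nonneg a]
      calc (‖b2‖ + 1) / δ2 * ‖y‖ = 1 * ((‖b2‖ + 1) * ‖y‖ / δ2) := by ring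
        _ ≤ 2 * (‖a‖ + 1) * ((‖b2‖ + 1) * ‖y‖ / δ2) := by gcongr
        _ = _ := by ring

theorem norm_bcTripleTerm_le (hδ1 : 0 < δ1) (hδ2 : 0 < δ2)
    (hc1 : ∀ l : ℕ, δ1 * (l + 1) ≤ ‖c1 + l‖) (hc2 : ∀ l : ℕ, δ2 * (l + 1) ≤ ‖c2 + l‖)
    (a b1 b2 x y : ℂ) (t : ℕ × ℕ × ℕ) :
    ‖bcTripleTerm a b1 b2 c1 c2 x y t‖ ≤
      (4 * (2 * (‖a‖ + 1) * (‖b1‖ + 1) * ‖x‖ / δ1) *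
          (2 * (‖a‖ + 1) * (‖b2‖ + 1) * ‖y‖ / δ2)) ^ t.1 *
        ((2 * (‖a‖ + 1) * (‖b1‖ + 1) * ‖x‖ / δ1) ^ t.2.1 *
          (2 * (‖a‖ + 1) * (‖b2‖ + 1) * ‖y‖ / δ2) ^ t.2.2) := by
  obtain ⟨k, i, j⟩ := t
  rw [bcTripleTerm, norm_mul _ (_ * _), norm_mul (gaussTerm _ _ _ _ _)]
  calc _ ≤ (2 * (‖a‖ + 1) * (‖b1‖ + 1) * ‖x‖ / δ1) ^ k *
          (2 * (‖a‖ + 1) * (‖b2‖ + 1) * ‖y‖ / δ2) ^ k *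
        (2 ^ k * (2 * (‖a‖ + 1) * (‖b1‖ + 1) * ‖x‖ / δ1) ^ i *
          (2 ^ k * (2 * (‖a‖ + 1) * (‖b2‖ + 1) * ‖y‖ / δ2) ^ j)) := by
        gcongr
        · exact norm_bcCoeff_mul_le hδ1 hδ2 hc1 hc2 a b1 b2 x y k
        · exact norm_gaussTerm_add_natCast_le hδ1 hc1 a b1 x k i
        · exact norm_gaussTerm_add_natCast_le hδ2 hc2 a b2 y k j
    _ = _ := by rw [mul_pow, mul_pow, show (4 : ℝ) = 2 * 2 by norm_num, mul_pow]; ring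

end Estimates

theorem summable_geometric_triple {r s : ℝ} (hr : 0 ≤ r) (hs : 0 ≤ s) (hr' : r < 1 / 2)
    (hs' : s < 1 / 2) :
    Summable fun t : ℕ × ℕ × ℕ => (4 * r * s) ^ t.1 * (r ^ t.2.1 * s ^ t.2.2) := by
  refine (summable_geometric_of_lt_one (by positivity) (by nlinarith)).mul_of_nonneg
    ((summable_geometric_of_lt_one hr (by linarith)).mul_of_nonneg
      (summable_geometric_of_lt_one hs (by linarith)) (fun _ => by positivity)
      (fun _ => by positivity)) (fun _ => by positivity) (fun _ => by positivity)

/-- Burchnall–Chaundy expansion: for x, y in a suitable neighborhood of 0,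
F₂(a;b₁,b₂;c₁,c₂;x,y) = ∑_k (a)_k(b₁)_k(b₂)_k/(k!(c₁)_k(c₂)_k) xᵏyᵏ
  F(a+k,b₁+k;c₁+k;x) F(a+k,b₂+k;c₂+k;y), both sides converging absolutely. -/
theorem burchnall_chaundy (a b1 b2 c1 c2 : ℂ)
    (hc1 : ∀ l : ℕ, c1 ≠ -(l : ℂ)) (hc2 : ∀ l : ℕ, c2 ≠ -(l : ℂ)) :
    ∃ ε > (0 : ℝ), ∀ x y : ℂ, ‖x‖ < ε → ‖y‖ < ε →
      (Summable (fun p : ℕ × ℕ => ‖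
        ((ascPochhammer ℂ (p.1 + p.2)).eval a *
          (ascPochhammer ℂ p.1).eval b1 * (ascPochhammer ℂ p.2).eval b2 * x ^ p.1 * y ^ p.2 /
          ((Nat.factorial p.1 : ℂ) * (Nat.factorial p.2 : ℂ) *
            (ascPochhammer ℂ p.1).eval c1 * (ascPochhammer ℂ p.2).eval c2))‖)) ∧
      (Summable (fun k : ℕ => ‖bcTerm a b1 b2 c1 c2 x y k‖)) ∧
      appellF2 a b1 b2 c1 c2 x y = ∑' k : ℕ, bcTerm a b1 b2 c1 c2 x y k := by
  obtain ⟨δ1, hδ1, hc1⟩ := exists_pos_mul_le_norm_add_natCast hc1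
  obtain ⟨δ2, hδ2, hc2⟩ := exists_pos_mul_le_norm_add_natCast hc2
  have hsmall : ∀ {δ : ℝ} {b z : ℂ}, 0 < δ → ‖z‖ < δ / (4 * (‖a‖ + 1) * (‖b‖ + 1)) →
      2 * (‖a‖ + 1) * (‖b‖ + 1) * ‖z‖ / δ < 1 / 2 := fun hδ hz => by
    rw [lt_div_iff₀ (by positivity)] at hz
    rw [div_lt_iff₀ hδ]
    linarith
  refine ⟨min (δ1 / (4 * (‖a‖ + 1) * (‖b1‖ + 1))) (δ2 / (4 * (‖a‖ + 1) * (‖b2‖ + 1))),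
    by positivity, fun x y hx hy => ?_⟩
  have hx := hsmall hδ1 (hx.trans_le (min_le_left _ _))
  have hy := hsmall hδ2 (hy.trans_le (min_le_right _ _))
  have hu := summable_norm_gaussTerm_add_natCast hδ1 hc1 (hx.trans (by norm_num))
  have hv := summable_norm_gaussTerm_add_natCast hδ2 hc2 (hy.trans (by norm_num))
  have hG := (summable_geometric_triple (by positivity) (by positivity) hx hy).of_nonneg_of_le
    (fun _ => norm_nonneg _) (norm_bcTripleTerm_le hδ1 hδ2 hc1 hc2 a b1 b2 x y)
  exact ⟨summable_norm_appellTerm hG, summable_norm_bcTerm hu hv hG,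
    (hasSum_appellTerm hG).tsum_eq.trans (tsum_bcTerm hu hv hG).symm⟩
end

section
/- For ξ_k = (r² − r_k²)/r² and ξ_l = (r² − r_l²)/r² with k ≠ l (notation as below), the gradients satisfy ∑_{i=1}^{m} (∂ξ_k/∂x_i)(∂ξ_l/∂x_i) = (2/r²)( x_{0k}/x_k + x_{0l}/x_l ) ξ_k ξ_l. -/
/-!
Since r² − r_k² = −4 x_k x₀ₖ, we have ξ_k = −4 x₀ₖ x_k / r², whose gradient is
ξ_k (e_k / x_k − 2 (x − x₀) / r²). In the dot product of two such gradients the term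
e_k · e_l vanishes for k ≠ l and |x − x₀|² = r², leaving
ξ_k ξ_l (4 − 2 (x_k − x₀ₖ) / x_k − 2 (x_l − x₀ₗ) / x_l) / r² = (2 / r²)(x₀ₖ / x_k + x₀ₗ / x_l) ξ_k ξ_l.
-/

open Finset

/-- Partial derivative in the i-th coordinate direction. -/
noncomputable def pd {m : ℕ} (i : Fin m) (f : (Fin m → ℝ) → ℝ) (x : Fin m → ℝ) : ℝ :=
  fderiv ℝ f x (Pi.single i 1)

/-- r² = ∑ (x_i − x₀ᵢ)². -/
def r2 {m : ℕ} (x0 x : Fin m → ℝ) : ℝ := ∑ i : Fin m, (x i - x0 i) ^ 2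

/-- r_k² = (x_k + x₀ₖ)² + ∑_{i≠k} (x_i − x₀ᵢ)². -/
def rk2 {m : ℕ} (x0 : Fin m → ℝ) (k : Fin m) (x : Fin m → ℝ) : ℝ :=
  (x k + x0 k) ^ 2 + ∑ i ∈ univ \ {k}, (x i - x0 i) ^ 2

/-- ξ_k = (r² − r_k²)/r². -/
noncomputable def xi {m : ℕ} (x0 : Fin m → ℝ) (k : Fin m) (x : Fin m → ℝ) : ℝ :=
  (r2 x0 x - rk2 x0 k x) / r2 x0 x

lemma sum_single_sub_mul_single_sub {ι : Type*} [Fintype ι] [DecidableEq ι] (d : ι → ℝ)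
    {k l : ι} (hkl : k ≠ l) (a b c : ℝ) :
    ∑ i, ((Pi.single k a : ι → ℝ) i - c * d i) * ((Pi.single l b : ι → ℝ) i - c * d i) =
      c ^ 2 * ∑ i, d i ^ 2 - c * (a * d k + b * d l) := by
  have hsingle : ∀ i, (Pi.single k a : ι → ℝ) i * (Pi.single l b : ι → ℝ) i = 0 := fun i => by
    by_cases hi : i = k
    · subst hi; simp [hkl]
    · simp [hi]
  simp only [sub_mul, mul_sub, sum_sub_distrib, hsingle, sum_const_zero]
  have hsq : ∑ i, c * d i * (c * d i) = c ^ 2 * ∑ i, d i ^ 2 := by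
    rw [mul_sum]; exact sum_congr rfl fun i _ => by ring
  simp only [Pi.single_apply, ite_mul, mul_ite, zero_mul, mul_zero, sum_ite_eq', mem_univ,
    if_true, hsq]
  ring

section PartialDerivatives

variable {m : ℕ} {f g : (Fin m → ℝ) → ℝ} {x : Fin m → ℝ}

lemma DifferentiableAt.hasDerivAt_pd (hf : DifferentiableAt ℝ f x) (i : Fin m) :
    HasDerivAt (fun t : ℝ => f (x + t • Pi.single i 1)) (pd i f x) 0 := by
  have hline : HasDerivAt (fun t : ℝ => x + t • Pi.single i (1 : ℝ)) (Pi.single i 1) 0 := by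
    simpa using ((hasDerivAt_id (0 : ℝ)).smul_const (Pi.single i (1 : ℝ))).const_add x
  exact hf.hasFDerivAt.comp_hasDerivAt_of_eq (0 : ℝ) hline (by simp)

lemma pd_div (hf : DifferentiableAt ℝ f x) (hg : DifferentiableAt ℝ g x) (hgx : g x ≠ 0)
    (i : Fin m) :
    pd i (fun y => f y / g y) x = (pd i f x * g x - f x * pd i g x) / g x ^ 2 := by
  have hquot := (hf.hasDerivAt_pd i).fun_div (hg.hasDerivAt_pd i) (by simpa using hgx)
  simp only [zero_smul, add_zero] at hquot
  have hdiff : DifferentiableAt ℝ (fun y => f y / g y) x := by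
    fun_prop (disch := exact hgx)
  exact (hdiff.hasDerivAt_pd i).unique hquot

end PartialDerivatives

section Xi

variable {m : ℕ} (x0 x : Fin m → ℝ)

lemma hasFDerivAt_r2 :
    HasFDerivAt (r2 x0)
      (∑ j, (2 * (x j - x0 j)) • (ContinuousLinearMap.proj j : (Fin m → ℝ) →L[ℝ] ℝ)) x := by
  have hterm (j : Fin m) : HasFDerivAt (fun y : Fin m → ℝ => (y j - x0 j) ^ 2)
      ((2 * (x j - x0 j)) • (ContinuousLinearMap.proj j : (Fin m → ℝ) →L[ℝ] ℝ)) x := by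
    simpa using ((hasFDerivAt_apply j x).sub_const (x0 j)).pow 2
  exact HasFDerivAt.fun_sum fun j _ => hterm j

lemma pd_r2 (i : Fin m) : pd i (r2 x0) x = 2 * (x i - x0 i) := by
  simp [pd, (hasFDerivAt_r2 x0 x).fderiv, Pi.single_apply]

lemma xi_eq_div (k : Fin m) : xi x0 k = fun y => -4 * x0 k * y k / r2 x0 y := by
  funext y
  have hsplit : r2 x0 y = (y k - x0 k) ^ 2 + ∑ i ∈ univ \ {k}, (y i - x0 i) ^ 2 := by
    rw [r2, sum_eq_sum_sdiff_singleton_add (mem_univ k)]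
    ring
  rw [xi, rk2, hsplit]
  ring

lemma pd_xi {k : Fin m} (hxk : x k ≠ 0) (hr : r2 x0 x ≠ 0) (i : Fin m) :
    pd i (xi x0 k) x =
      xi x0 k x * ((Pi.single k (x k)⁻¹ : Fin m → ℝ) i - 2 / r2 x0 x * (x i - x0 i)) := by
  have hnum : HasFDerivAt (fun y : Fin m → ℝ => -4 * x0 k * y k)
      ((-4 * x0 k) • (ContinuousLinearMap.proj k : (Fin m → ℝ) →L[ℝ] ℝ)) x :=
    (hasFDerivAt_apply k x).const_mul _
  rw [xi_eq_div, pd_div hnum.differentiableAt (hasFDerivAt_r2 x0 x).differentiableAt hr,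
    pd, hnum.fderiv, pd_r2]
  rcases eq_or_ne i k with rfl | hik
  · simp only [smul_apply, ContinuousLinearMap.proj_apply, Pi.single_eq_same]
    field_simp
    ring
  · simp only [smul_apply, ContinuousLinearMap.proj_apply,
      Pi.single_eq_of_ne hik, Pi.single_eq_of_ne' hik]
    field_simp
    ring

end Xi

theorem grad_xi_dot_general (m : ℕ) (x0 x : Fin m → ℝ) (k l : Fin m) (hkl : k ≠ l)
    (hxk : 0 < x k) (hxl : 0 < x l) (hr : r2 x0 x ≠ 0) :
    ∑ i : Fin m, pd i (xi x0 k) x * pd i (xi x0 l) x =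
      (2 / r2 x0 x) * (x0 k / x k + x0 l / x l) * xi x0 k x * xi x0 l x := by
  have hgrad : ∑ i : Fin m, pd i (xi x0 k) x * pd i (xi x0 l) x =
      xi x0 k x * xi x0 l x * ((2 / r2 x0 x) ^ 2 * r2 x0 x
        - 2 / r2 x0 x * ((x k)⁻¹ * (x k - x0 k) + (x l)⁻¹ * (x l - x0 l))) := by
    simp_rw [pd_xi x0 x hxk.ne' hr, pd_xi x0 x hxl.ne' hr, mul_mul_mul_comm, ← mul_sum,
      sum_single_sub_mul_single_sub (fun i => x i - x0 i) hkl]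
    rfl
  rw [hgrad]
  field_simp
  ring

/-- ∑_i (∂ξ_k/∂x_i)(∂ξ_l/∂x_i) = (2/r²)(x₀ₖ/xₖ + x₀ₗ/xₗ) ξ_k ξ_l for k ≠ l. -/
theorem grad_xi_dot (m : ℕ) (x0 x : Fin m → ℝ) (k l : Fin m) (hkl : k ≠ l)
    (hxk : 0 < x k) (hx0k : 0 < x0 k) (hxl : 0 < x l) (hx0l : 0 < x0 l)
    (hr : r2 x0 x ≠ 0) :
    ∑ i : Fin m, pd i (xi x0 k) x * pd i (xi x0 l) x =
      (2 / r2 x0 x) * (x0 k / x k + x0 l / x l) * xi x0 k x * xi x0 l x :=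
  grad_xi_dot_general m x0 x k l hkl hxk hxl hr
end
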